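/- Linear convergence of entropy-regularized NPG in the bandit case: fix a finite action set A, reward vector r ∈ ℝ^A, τ > 0, and step size η with 0 < ητ < 1. Define the sequence of probability distributions π^{(t)} on A by π^{(t+1)}(a) ∝ (π^{(t)}(a))^{1−ητ} exp(η r(a)), starting from any π^{(0)} with full support. Let π*_τ = softmax(r/τ). Then for all t ≥ 0, ‖log π^{(t)} − log π*_τ‖_∞ ≤ 2(1−ητ)^t ‖log π^{(0)} − log π*_τ‖_∞. -/

import Mathlib

/-!
Write `δₜ = log π⁽ᵗ⁾ - log π*_τ`. On positive vectors the update is the softmax of the logits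
`(1 - ητ) log π⁽ᵗ⁾ + η r`, and `η r = ητ · (r / τ)` with `log π*_τ = r / τ - const`, so
`δₜ₊₁ = (1 - ητ) δₜ + const` and hence `δₜ = (1 - ητ)ᵗ δ₀ + cₜ` for a scalar `cₜ`. Since
`π⁽ᵗ⁾` and `π*_τ` are both probability vectors, `δₜ` has an entry of each sign, which forces
`|cₜ| ≤ (1 - ητ)ᵗ ‖δ₀‖_∞`; this shift is what costs the factor `2`.
-/

open Finset

lemma exists_eq_pow_mul_add_of_forall_eq_mul_add {A : Type*} {δ : ℕ → A → ℝ} {k : ℝ}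
    (h : ∀ t, ∃ c : ℝ, ∀ a, δ (t + 1) a = k * δ t a + c) (t : ℕ) :
    ∃ c : ℝ, ∀ a, δ t a = k ^ t * δ 0 a + c := by
  induction t with
  | zero => exact ⟨0, fun a => by simp⟩
  | succ n ih =>
    obtain ⟨c, hc⟩ := ih
    obtain ⟨d, hd⟩ := h n
    exact ⟨k * c + d, fun a => by rw [hd, hc]; ring⟩

section

open Real

variable {A : Type*} [Fintype A]

lemma exists_log_sub_log_nonneg_and_nonpos [Nonempty A] {p q : A → ℝ}
    (hp : ∀ a, 0 < p a) (hq : ∀ a, 0 < q a) (h : ∑ a, p a = ∑ a, q a) :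
    (∃ a, 0 ≤ log (p a) - log (q a)) ∧ ∃ a, log (p a) - log (q a) ≤ 0 := by
  obtain ⟨a, -, hqa⟩ := exists_le_of_sum_le univ_nonempty h.ge
  obtain ⟨b, -, hpb⟩ := exists_le_of_sum_le univ_nonempty h.le
  exact ⟨⟨a, sub_nonneg.2 (log_le_log (hq a) hqa)⟩,
    ⟨b, sub_nonpos.2 (log_le_log (hp b) hpb)⟩⟩

lemma norm_le_two_mul_norm_of_eq_add_const {u v : A → ℝ} {c : ℝ} (hv : ∀ a, v a = u a + c)
    (hnonneg : ∃ a, 0 ≤ v a) (hnonpos : ∃ a, v a ≤ 0) : ‖v‖ ≤ 2 * ‖u‖ := by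
  have hu : ∀ a, |u a| ≤ ‖u‖ := fun a => by simpa using norm_le_pi_norm u a
  have hc : |c| ≤ ‖u‖ := by
    obtain ⟨a, ha⟩ := hnonneg
    obtain ⟨b, hb⟩ := hnonpos
    rw [hv] at ha hb
    have := abs_le.1 (hu a)
    have := abs_le.1 (hu b)
    exact abs_le.2 ⟨by linarith, by linarith⟩
  refine (pi_norm_le_iff_of_nonneg (by positivity)).2 fun a => ?_
  calc ‖v a‖ = |u a + c| := by rw [hv, Real.norm_eq_abs]
    _ ≤ |u a| + |c| := abs_add_le _ _
    _ ≤ 2 * ‖u‖ := by linarith [hu a]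

noncomputable def softmax (x : A → ℝ) (a : A) : ℝ := exp (x a) / ∑ b, exp (x b)

section Nonempty

variable [Nonempty A]

lemma sum_exp_pos (x : A → ℝ) : 0 < ∑ a, exp (x a) :=
  sum_pos (fun a _ => exp_pos (x a)) univ_nonempty

lemma softmax_pos (x : A → ℝ) (a : A) : 0 < softmax x a :=
  div_pos (exp_pos _) (sum_exp_pos x)

lemma sum_softmax (x : A → ℝ) : ∑ a, softmax x a = 1 := by
  unfold softmax
  rw [← sum_div, div_self (sum_exp_pos x).ne']

lemma log_softmax (x : A → ℝ) (a : A) : log (softmax x a) = x a - log (∑ b, exp (x b)) := by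
  rw [softmax, log_div (exp_ne_zero _) (sum_exp_pos x).ne', log_exp]

end Nonempty

/-- One step of entropy-regularized NPG with step size `η` and temperature `τ`. -/
noncomputable def npgUpdate (r : A → ℝ) (τ η : ℝ) (p : A → ℝ) (a : A) : ℝ :=
  p a ^ (1 - η * τ) * exp (η * r a) / ∑ a', p a' ^ (1 - η * τ) * exp (η * r a')

variable {r p : A → ℝ} {τ η : ℝ}

lemma npgUpdate_eq_softmax (hp : ∀ a, 0 < p a) :
    npgUpdate r τ η p = softmax fun a => (1 - η * τ) * log (p a) + η * r a := by
  funext a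
  simp only [npgUpdate, softmax, exp_add, rpow_def_of_pos (hp _), mul_comm (1 - η * τ)]

variable [Nonempty A]

lemma npgUpdate_pos (hp : ∀ a, 0 < p a) (a : A) : 0 < npgUpdate r τ η p a := by
  rw [npgUpdate_eq_softmax hp]
  exact softmax_pos _ a

lemma exists_log_npgUpdate_sub_log_softmax_eq (hτ : τ ≠ 0) (hp : ∀ a, 0 < p a) :
    ∃ c : ℝ, ∀ a, log (npgUpdate r τ η p a) - log (softmax (fun b => r b / τ) a) =
      (1 - η * τ) * (log (p a) - log (softmax (fun b => r b / τ) a)) + c := by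
  refine ⟨η * τ * log (∑ b, exp (r b / τ)) -
    log (∑ b, exp ((1 - η * τ) * log (p b) + η * r b)), fun a => ?_⟩
  rw [npgUpdate_eq_softmax hp, log_softmax, log_softmax]
  field_simp
  ring

end

theorem bandit_npg_linear_convergence_general {A : Type*} [Fintype A] [Nonempty A]
    (r : A → ℝ) (τ η : ℝ) (hτ : 0 < τ) (hητ : η * τ < 1)
    (π : ℕ → A → ℝ) (hpos : ∀ a, 0 < π 0 a)
    (hsum : ∀ t, ∑ a, π t a = 1)
    (hupd : ∀ t a, π (t + 1) a =
      (π t a) ^ (1 - η * τ) * Real.exp (η * r a) /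
        ∑ a', (π t a') ^ (1 - η * τ) * Real.exp (η * r a')) :
    ∀ t, ‖(fun a => Real.log (π t a)) -
        (fun a => Real.log (Real.exp (r a / τ) / ∑ a', Real.exp (r a' / τ)))‖ ≤
      2 * (1 - η * τ) ^ t *
        ‖(fun a => Real.log (π 0 a)) -
          (fun a => Real.log (Real.exp (r a / τ) / ∑ a', Real.exp (r a' / τ)))‖ := by
  intro t
  set p := softmax fun a => r a / τ
  have hπ : ∀ n a, 0 < π n a := by
    intro n
    induction n with
    | zero => exact hpos
    | succ n ih => intro a; rw [hupd n a]; exact npgUpdate_pos ih a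
  obtain ⟨c, hc⟩ := exists_eq_pow_mul_add_of_forall_eq_mul_add
    (δ := fun n a => Real.log (π n a) - Real.log (p a))
    (fun n => by
      obtain ⟨c, hc⟩ := exists_log_npgUpdate_sub_log_softmax_eq (r := r) (η := η) hτ.ne' (hπ n)
      exact ⟨c, fun a => by rw [hupd n a]; exact hc a⟩) t
  obtain ⟨hnonneg, hnonpos⟩ := exists_log_sub_log_nonneg_and_nonpos (hπ t) (softmax_pos _)
    ((hsum t).trans (sum_softmax _).symm)
  calc _ ≤ 2 * ‖(1 - η * τ) ^ t • ((fun a => Real.log (π 0 a)) - fun a => Real.log (p a))‖ :=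
        norm_le_two_mul_norm_of_eq_add_const hc hnonneg hnonpos
    _ = _ := by
      rw [norm_smul, norm_pow, Real.norm_of_nonneg (by linarith), mul_assoc]
      rfl

/-- Linear convergence of entropy-regularized NPG in the bandit case. -/
theorem bandit_npg_linear_convergence {A : Type*} [Fintype A] [Nonempty A]
    (r : A → ℝ) (τ η : ℝ) (hτ : 0 < τ) (hη : 0 < η) (hητ : η * τ < 1)
    (π : ℕ → A → ℝ) (hpos : ∀ a, 0 < π 0 a)
    (hsum : ∀ t, ∑ a, π t a = 1)
    (hupd : ∀ t a, π (t + 1) a =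
      (π t a) ^ (1 - η * τ) * Real.exp (η * r a) /
        ∑ a', (π t a') ^ (1 - η * τ) * Real.exp (η * r a')) :
    ∀ t, ‖(fun a => Real.log (π t a)) -
        (fun a => Real.log (Real.exp (r a / τ) / ∑ a', Real.exp (r a' / τ)))‖ ≤
      2 * (1 - η * τ) ^ t *
        ‖(fun a => Real.log (π 0 a)) -
          (fun a => Real.log (Real.exp (r a / τ) / ∑ a', Real.exp (r a' / τ)))‖ :=
  bandit_npg_linear_convergence_general r τ η hτ hητ π hpos hsum hupd
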